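/- Let x ∈ 𝒟_n ∩ ST_n^r, let y ∈ ST_m^s, and let f ∈ Sh^≺(r,s) with f ≠ ε(r,s). If there exist z ∈ 𝒟 and w ∈ ST_l such that f∘(x×y) = z\w, then l < m. -/

import Mathlib

/-! Write `f ∘ (x × y) = z \ w` as `x.map f ++ (y shifted by r).map f = z.map (· + rk w) ++ w`.
If `l ≥ m`, the first `|z|` letters of `x` are sent above `rk w`, while the rest of `x` and the
whole second block of `f` are sent to at most `rk w`. For a shuffle whose second block stays
`≤ c`, every value above `c` is taken on the first block, and counting shows that `f v = v + s`
there, exactly as for `ε(r,s)`. So either `|z| = n`, and then `f = ε(r,s)`, or the prefix of `x`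
is `z` shifted by `rk w - s` and lies above the suffix `x'`, i.e. `x = z \ x'`, which is
impossible for `x ∈ 𝒟`. -/

open scoped TensorProduct

namespace SurjPerm

/-- The maximal value of a word (the `r` such that a surjection lands in `{1,…,r}`). -/
def rk (l : List ℕ) : ℕ := l.foldr max 0

/-- `l` is (the list of values of) a surjective map `{1,…,n} → {1,…,r}`
    with `n = l.length ≥ 1` and `r = rk l`. -/
def IsST (l : List ℕ) : Prop := l ≠ [] ∧ ∀ k, k ∈ l ↔ 1 ≤ k ∧ k ≤ rk l

/-- membership in `ST_n^r`. -/
def memST (l : List ℕ) (n r : ℕ) : Prop := IsST l ∧ l.length = n ∧ rk l = r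

/-- concatenation `x × y`. -/
def cat (x y : List ℕ) : List ℕ := x ++ y.map (· + rk x)

/-- iterated concatenation `x¹ × x² × … × xᵖ`. -/
def catAll (l : List (List ℕ)) : List ℕ := l.foldr cat []

/-- standardization of a word. -/
def stdList (l : List ℕ) : List ℕ := l.map fun v => (l.dedup.filter (· ≤ v)).length

/-- corestriction `x|^K`. -/
def corestrict (x : List ℕ) (K : Finset ℕ) : List ℕ := stdList (x.filter (· ∈ K))

/-- the `i`-th entry of a word, `1`-indexed: `ent f i = f(i)`. -/
def ent (l : List ℕ) (i : ℕ) : ℕ := l.getD (i - 1) 0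

/-- composition `f ∘ x` of the map (word) `f` with the map (word) `x`. -/
def wcomp (f x : List ℕ) : List ℕ := x.map fun v => ent f v

/-- the identity permutation `1_n` as a word. -/
def idW (n : ℕ) : List ℕ := (List.range n).map (· + 1)

/-- the permutation `ε(r₁,…,r_p)` as a word: the `i`-th block of positions
    carries the values shifted above all later blocks. -/
def epsW : List ℕ → List ℕ
  | [] => []
  | r :: rs => ((List.range r).map (· + rs.sum + 1)) ++ epsW rs

/-- `x \ y := ε(r,s) ∘ (x × y)`. -/
def bsl (x y : List ℕ) : List ℕ := wcomp (epsW [rk x, rk y]) (cat x y)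

/-- `f` is strictly increasing on each block of the composition `ns`. -/
def blockIncr (ns f : List ℕ) : Prop :=
  ∀ k, k < ns.length → ∀ i j, (ns.take k).sum < i → i < j → j ≤ (ns.take (k + 1)).sum →
    ent f i < ent f j

/-- `(n₁,…,n_p)`-stuffles. -/
def IsStuffle (ns f : List ℕ) : Prop := IsST f ∧ f.length = ns.sum ∧ blockIncr ns f

/-- `(n₁,…,n_p)`-shuffles: stuffles which are permutations. -/
def IsShuffle (ns f : List ℕ) : Prop := IsStuffle ns f ∧ rk f = ns.sum

/-- irreducible surjections. -/
def Irr (l : List ℕ) : Prop := IsST l ∧ ¬ ∃ g h, IsST g ∧ IsST h ∧ l = cat g h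

/-- the set of irreducible surjections of arity `n`. -/
def IrrN (n : ℕ) : Set (List ℕ) := {l | Irr l ∧ l.length = n}

/-- the product `x · y` on surjections. -/
def dotW (x y : List ℕ) : List ℕ :=
  x.map (fun v => if v < rk x then v else rk x + rk y - 1) ++
    y.map (fun v => if v < rk y then v + rk x - 1 else rk x + rk y - 1)

/-- iterated `·` product `x¹ · x² · … · xᵖ`. -/
def dotAll : List (List ℕ) → List ℕ
  | [] => []
  | a :: as => as.foldl dotW a

/-- indecomposable surjections (for the `·` product). -/
def Indec (l : List ℕ) : Prop := IsST l ∧ ¬ ∃ a b, IsST a ∧ IsST b ∧ l = dotW a b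

/-- the set `𝒟`. -/
def inD (x : List ℕ) : Prop :=
  IsST x ∧ ((x = [1] ∨ x = [1, 1]) ∨
    (3 ≤ x.length ∧ Irr x ∧
      ¬ ∃ y z, ∃ _ : y.length < x.length, inD y ∧ IsST z ∧ x = bsl y z))
termination_by x.length
decreasing_by assumption

/-- the set `𝒞`. -/
def inC (x : List ℕ) : Prop :=
  Irr x ∧
    ((∃ y z, ∃ _ : y.length < x.length, Irr y ∧ ¬ inC y ∧ IsST z ∧ x = bsl y z) ∨
      (∃ a b, IsST a ∧ IsST b ∧ x = dotW a b))
termination_by x.length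
decreasing_by assumption

/-- the set `𝔅(l)`, with `𝔅(0) = 𝒟`. -/
def inBfrak (l : ℕ) (x : List ℕ) : Prop :=
  if l = 0 then inD x else ∃ u v, inD u ∧ IsST v ∧ v.length = l ∧ x = bsl u v

/-- `t_i ∘ f`: exchange the values `i` and `i+1`. -/
def swapVal (i : ℕ) (l : List ℕ) : List ℕ :=
  l.map fun v => if v = i then i + 1 else if v = i + 1 then i else v

/-- covering relation of the weak Bruhat order on `ST_n^r`:
    `f < t_i ∘ f` whenever `f⁻¹(i) < f⁻¹(i+1)`. -/
def wBCov (f g : List ℕ) : Prop :=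
  ∃ i, 1 ≤ i ∧ i + 1 ≤ rk f ∧ g = swapVal i f ∧
    ∀ a b, a < f.length → b < f.length → f.getD a 0 = i → f.getD b 0 = i + 1 → a < b

/-- strict weak Bruhat order. -/
def wBlt : List ℕ → List ℕ → Prop := Relation.TransGen wBCov

/-- weak Bruhat order. -/
def wBle : List ℕ → List ℕ → Prop := Relation.ReflTransGen wBCov

/-- the (0-indexed) positions `j₁-1 < … < j_λ-1` where the maximal value is attained. -/
def maxPos (x : List ℕ) : List ℕ :=
  (List.range x.length).filter fun i => x.getD i 0 = rk x

/-- `λ(x)`. -/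
def lam (x : List ℕ) : ℕ := (maxPos x).length

/-- `𝕄(x) = (𝕄(x)_λ, …, 𝕄(x)₁)`. -/
def Mword (x : List ℕ) : List ℕ :=
  (List.zipWith (fun a b => b - a - 1) (maxPos x) ((maxPos x).drop 1) ++
    [x.length - (maxPos x).getLastD 0 - 1]).reverse

/-- the pieces `x|^{1..l₁}, x|^{l₁+1..l₂}, …, x|^{l_p+1..r}`. -/
def pieces (x : List ℕ) (ls : List ℕ) : List (List ℕ) :=
  ((0 :: ls).zip (ls ++ [rk x])).map fun p => corestrict x (Finset.Icc (p.1 + 1) p.2)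

/-- `x^{(l₁,…,l_p)}`. -/
def xfam (x : List ℕ) (ls : List ℕ) : List ℕ := catAll (pieces x ls)

variable (𝕂 : Type) [Field 𝕂]

/-- the vector space `𝕂[ST]` (with basis all words; only the basis elements in `ST` matter). -/
abbrev V := List ℕ →₀ 𝕂

/-- the coproduct `Δ`. -/
noncomputable def Delta : V 𝕂 →ₗ[𝕂] TensorProduct 𝕂 (V 𝕂) (V 𝕂) :=
  Finsupp.lsum 𝕂 fun x => LinearMap.toSpanSingleton 𝕂 _
    (∑ i ∈ Finset.Ico 1 (rk x),
      Finsupp.single (corestrict x (Finset.Icc 1 i)) (1 : 𝕂) ⊗ₜ[𝕂]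
        Finsupp.single (corestrict x (Finset.Icc (i + 1) (rk x))) (1 : 𝕂))

/-- the subspace `𝕂[ST_n]`. -/
noncomputable def STspanN (n : ℕ) : Submodule 𝕂 (V 𝕂) :=
  Submodule.span 𝕂 {v | ∃ l, IsST l ∧ l.length = n ∧ v = Finsupp.single l 1}

/-- `Prim(ST)_n = {v ∈ 𝕂[ST_n] : Δ v = 0}`. -/
noncomputable def PrimN (n : ℕ) : Submodule 𝕂 (V 𝕂) :=
  STspanN 𝕂 n ⊓ LinearMap.ker (Delta 𝕂)

/-- the projection `E`. -/
noncomputable def Emap : V 𝕂 →ₗ[𝕂] V 𝕂 :=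
  Finsupp.lsum 𝕂 fun x => LinearMap.toSpanSingleton 𝕂 _
    (∑ᶠ ls ∈ {ls : List ℕ | ls.Chain' (· < ·) ∧ ∀ l ∈ ls, 0 < l ∧ l < rk x},
      ((-1 : 𝕂) ^ ls.length) • Finsupp.single (xfam x ls) (1 : 𝕂))

/-- generic bilinear-on-basis operation indexed by a set of shuffles. -/
noncomputable def shOp (P : ℕ → ℕ → List ℕ → Prop) (a b : V 𝕂) : V 𝕂 :=
  Finsupp.sum a fun x cx => Finsupp.sum b fun y cy =>
    (cx * cy) • ∑ᶠ f ∈ {f : List ℕ | IsShuffle [rk x, rk y] f ∧ P (rk x) (rk y) f},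
      Finsupp.single (wcomp f (cat x y)) (1 : 𝕂)

/-- the dendriform operation `≻`. -/
noncomputable def succOp : V 𝕂 → V 𝕂 → V 𝕂 :=
  shOp 𝕂 fun r s f => ent f r < ent f (r + s)

/-- the dendriform operation `≺`. -/
noncomputable def precOp : V 𝕂 → V 𝕂 → V 𝕂 :=
  shOp 𝕂 fun r s f => ent f (r + s) < ent f r

/-- `ω^≺(y₁,…,y_k) = y₁ ≺ (y₂ ≺ (… ≺ y_k))`. -/
noncomputable def omPrec : List (V 𝕂) → V 𝕂
  | [] => 0
  | [a] => a
  | a :: as => precOp 𝕂 a (omPrec as)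

/-- `ω^≻(y₁,…,y_k) = ((y₁ ≻ y₂) ≻ …) ≻ y_k`. -/
noncomputable def omSucc : List (V 𝕂) → V 𝕂
  | [] => 0
  | a :: as => as.foldl (succOp 𝕂) a

/-- `ω^≺(l) ≻ x ≺ ω^≻(r)`, empty factors omitted. -/
noncomputable def mterm (x : V 𝕂) : List (V 𝕂) → List (V 𝕂) → V 𝕂
  | [], [] => x
  | [], r => precOp 𝕂 x (omSucc 𝕂 r)
  | l, [] => succOp 𝕂 (omPrec 𝕂 l) x
  | l, r => precOp 𝕂 (succOp 𝕂 (omPrec 𝕂 l) x) (omSucc 𝕂 r)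

/-- the brace operation `M^{ST}_{1k}(x; y₁,…,y_k)`. -/
noncomputable def braceM (x : V 𝕂) (ys : List (V 𝕂)) : V 𝕂 :=
  ∑ j ∈ Finset.range (ys.length + 1),
    ((-1 : 𝕂) ^ (ys.length - j)) • mterm 𝕂 x (ys.take j) (ys.drop j)

/-- generic bilinear-on-basis operation indexed by a set of stuffles, with `q`-weights
    `q^{s(f) - c}` where `s(f) = |f| - rk f`. -/
noncomputable def stOp (q : 𝕂) (c : ℕ) (P : ℕ → ℕ → List ℕ → Prop) (a b : V 𝕂) : V 𝕂 :=
  Finsupp.sum a fun x cx => Finsupp.sum b fun y cy =>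
    (cx * cy) • ∑ᶠ f ∈ {f : List ℕ | IsStuffle [rk x, rk y] f ∧ P (rk x) (rk y) f},
      q ^ (f.length - rk f - c) • Finsupp.single (wcomp f (cat x y)) (1 : 𝕂)

/-- `≻_q`. -/
noncomputable def succQ (q : 𝕂) : V 𝕂 → V 𝕂 → V 𝕂 :=
  stOp 𝕂 q 0 fun r s f => ent f r < ent f (r + s)

/-- `≺_q`. -/
noncomputable def precQ (q : 𝕂) : V 𝕂 → V 𝕂 → V 𝕂 :=
  stOp 𝕂 q 0 fun r s f => ent f (r + s) < ent f r

/-- `·_q`. -/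
noncomputable def dotQ (q : 𝕂) : V 𝕂 → V 𝕂 → V 𝕂 :=
  stOp 𝕂 q 1 fun r s f => ent f r = ent f (r + s)

/-- `≽_q = ≻_q + q ·_q`. -/
noncomputable def succcQ (q : 𝕂) (a b : V 𝕂) : V 𝕂 := succQ 𝕂 q a b + q • dotQ 𝕂 q a b

/-- `ω^{≺_q}`. -/
noncomputable def omPrecQ (q : 𝕂) : List (V 𝕂) → V 𝕂
  | [] => 0
  | [a] => a
  | a :: as => precQ 𝕂 q a (omPrecQ q as)

/-- `ω^{≽_q}`. -/
noncomputable def omSucccQ (q : 𝕂) : List (V 𝕂) → V 𝕂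
  | [] => 0
  | a :: as => as.foldl (succcQ 𝕂 q) a

/-- `ω^{≺_q}(l) ≽_q x ≺_q ω^{≽_q}(r)`, empty factors omitted. -/
noncomputable def mtermQ (q : 𝕂) (x : V 𝕂) : List (V 𝕂) → List (V 𝕂) → V 𝕂
  | [], [] => x
  | [], r => precQ 𝕂 q x (omSucccQ 𝕂 q r)
  | l, [] => succcQ 𝕂 q (omPrecQ 𝕂 q l) x
  | l, r => precQ 𝕂 q (succcQ 𝕂 q (omPrecQ 𝕂 q l) x) (omSucccQ 𝕂 q r)

/-- the brace operation `M^{ST(q)}_{1k}`. -/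
noncomputable def braceMQ (q : 𝕂) (x : V 𝕂) (ys : List (V 𝕂)) : V 𝕂 :=
  ∑ j ∈ Finset.range (ys.length + 1),
    ((-1 : 𝕂) ^ (ys.length - j)) • mtermQ 𝕂 q x (ys.take j) (ys.drop j)

/-- the shuffle product of two basis elements. -/
noncomputable def shufSingle (x y : List ℕ) : V 𝕂 :=
  ∑ᶠ f ∈ {f : List ℕ | IsShuffle [rk x, rk y] f},
    Finsupp.single (wcomp f (cat x y)) (1 : 𝕂)

/-- the shuffle product `*` on `𝕂[ST]`, as a bilinear map. -/
noncomputable def shufL : V 𝕂 →ₗ[𝕂] V 𝕂 →ₗ[𝕂] V 𝕂 :=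
  Finsupp.lsum 𝕂 fun x => LinearMap.toSpanSingleton 𝕂 _
    (Finsupp.lsum 𝕂 fun y => LinearMap.toSpanSingleton 𝕂 _ (shufSingle 𝕂 x y))

/-- the augmented space `𝕂·1 ⊕ 𝕂[ST]`. -/
abbrev Vp := 𝕂 × V 𝕂

/-- inclusion `𝕂[ST] ↪ 𝕂·1 ⊕ 𝕂[ST]`. -/
noncomputable def inclV : V 𝕂 →ₗ[𝕂] Vp 𝕂 := LinearMap.inr 𝕂 𝕂 (V 𝕂)

/-- the unit `1`. -/
noncomputable def oneVp : Vp 𝕂 := (1, 0)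

/-- the unital extension of the shuffle product to `𝕂·1 ⊕ 𝕂[ST]`, as a bilinear map:
    `(a + x)(b + y) = ab + (a y + b x + x * y)`.  In particular `1 * u = u = u * 1`. -/
noncomputable def mulVp : Vp 𝕂 →ₗ[𝕂] Vp 𝕂 →ₗ[𝕂] Vp 𝕂 :=
  LinearMap.mk₂ 𝕂 (fun u v => (u.1 * v.1, u.1 • v.2 + v.1 • u.2 + shufL 𝕂 u.2 v.2))
    (fun u u' v => by
      refine Prod.ext ?_ ?_ <;>
        simp [add_mul, add_smul, smul_add, map_add, LinearMap.add_apply] <;> abel)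
    (fun c u v => by
      refine Prod.ext ?_ ?_ <;>
        simp [mul_assoc, mul_smul, smul_add, smul_comm c v.1] <;> abel)
    (fun u v v' => by
      refine Prod.ext ?_ ?_ <;>
        simp [mul_add, add_smul, smul_add, map_add, LinearMap.add_apply] <;> abel)
    (fun c u v => by
      refine Prod.ext ?_ ?_ <;>
        simp [mul_left_comm, mul_smul, smul_add, smul_comm c u.1] <;> abel)

/-- the extension `Δ⁺` of `Δ` to `𝕂·1 ⊕ 𝕂[ST]`, with `Δ⁺(1) = 1 ⊗ 1` and
    `Δ⁺(x) = x ⊗ 1 + 1 ⊗ x + Δ(x)` for `x ∈ 𝕂[ST]`. -/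
noncomputable def DeltaP : Vp 𝕂 →ₗ[𝕂] TensorProduct 𝕂 (Vp 𝕂) (Vp 𝕂) :=
  (LinearMap.toSpanSingleton 𝕂 _ (oneVp 𝕂 ⊗ₜ[𝕂] oneVp 𝕂)).comp (LinearMap.fst 𝕂 𝕂 (V 𝕂))
    + (((TensorProduct.mk 𝕂 (Vp 𝕂) (Vp 𝕂)).flip (oneVp 𝕂)).comp (inclV 𝕂)).comp
        (LinearMap.snd 𝕂 𝕂 (V 𝕂))
    + ((TensorProduct.mk 𝕂 (Vp 𝕂) (Vp 𝕂) (oneVp 𝕂)).comp (inclV 𝕂)).comp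
        (LinearMap.snd 𝕂 𝕂 (V 𝕂))
    + ((TensorProduct.map (inclV 𝕂) (inclV 𝕂)).comp (Delta 𝕂)).comp (LinearMap.snd 𝕂 𝕂 (V 𝕂))

/-- componentwise product on the tensor square: `(a⊗b)·(c⊗d) = (a·c)⊗(b·d)`. -/
noncomputable def mulTsq :
    TensorProduct 𝕂 (Vp 𝕂) (Vp 𝕂) →ₗ[𝕂]
      TensorProduct 𝕂 (Vp 𝕂) (Vp 𝕂) →ₗ[𝕂] TensorProduct 𝕂 (Vp 𝕂) (Vp 𝕂) :=
  TensorProduct.lift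
    (((TensorProduct.mapBilinear (RingHom.id 𝕂) (Vp 𝕂) (Vp 𝕂) (Vp 𝕂) (Vp 𝕂)).comp (mulVp 𝕂)).compl₂
      (mulVp 𝕂))

/-- concatenation on the right with a fixed word, linearized: `x ↦ x × y`. -/
noncomputable def catR (y : List ℕ) : V 𝕂 →ₗ[𝕂] V 𝕂 :=
  Finsupp.lsum 𝕂 fun x => LinearMap.toSpanSingleton 𝕂 _ (Finsupp.single (cat x y) (1 : 𝕂))

/-- concatenation on the left with a fixed word, linearized: `y ↦ x × y`. -/
noncomputable def catL (x : List ℕ) : V 𝕂 →ₗ[𝕂] V 𝕂 :=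
  Finsupp.lsum 𝕂 fun y => LinearMap.toSpanSingleton 𝕂 _ (Finsupp.single (cat x y) (1 : 𝕂))

/-- `Sh^•(r₁,…,r_p)`: surjections onto `{1,…,R-p+1}` (where `R = r₁+…+r_p`), strictly
    increasing on each block, attaining the maximal value exactly at the block ends, and whose
    corestriction to `{1,…,R-p}` is a `(r₁-1,…,r_p-1)`-shuffle. -/
def ShBull (rs : List ℕ) (f : List ℕ) : Prop :=
  memST f rs.sum (rs.sum - rs.length + 1) ∧ blockIncr rs f ∧
    (∀ i, 1 ≤ i → i ≤ rs.sum →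
      (ent f i = rs.sum - rs.length + 1 ↔ ∃ k, k < rs.length ∧ i = (rs.take (k + 1)).sum)) ∧
    IsShuffle (rs.map (· - 1)) (corestrict f (Finset.Icc 1 (rs.sum - rs.length)))

lemma rk_le_iff {l : List ℕ} {c : ℕ} : rk l ≤ c ↔ ∀ k ∈ l, k ≤ c := by
  induction l with
  | nil => simp [rk]
  | cons a t ih => simp [rk, ← ih]

lemma le_rk_of_mem {l : List ℕ} {k : ℕ} (h : k ∈ l) : k ≤ rk l :=
  rk_le_iff.mp le_rfl k h

lemma isST_of_forall_mem_iff {l : List ℕ} {d : ℕ} (h : ∀ k, k ∈ l ↔ 1 ≤ k ∧ k ≤ d)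
    (hd : 1 ≤ d) : IsST l ∧ rk l = d := by
  have hd_mem : d ∈ l := (h d).2 ⟨hd, le_rfl⟩
  have hrk : rk l = d :=
    le_antisymm (rk_le_iff.mpr fun k hk => ((h k).1 hk).2) (le_rk_of_mem hd_mem)
  exact ⟨⟨List.ne_nil_of_mem hd_mem, by rwa [hrk]⟩, hrk⟩

namespace IsST

variable {l : List ℕ} (hl : IsST l)
include hl

lemma one_le_of_mem {k : ℕ} (hk : k ∈ l) : 1 ≤ k := ((hl.2 k).1 hk).1

lemma mem_of_le {k : ℕ} (h1 : 1 ≤ k) (h2 : k ≤ rk l) : k ∈ l := (hl.2 k).2 ⟨h1, h2⟩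

lemma one_le_rk : 1 ≤ rk l := by
  obtain ⟨k, hk⟩ := List.exists_mem_of_ne_nil l hl.1
  exact (hl.one_le_of_mem hk).trans (le_rk_of_mem hk)

end IsST

lemma ent_mem {l : List ℕ} {v : ℕ} (h1 : 1 ≤ v) (h2 : v ≤ l.length) : ent l v ∈ l := by
  rw [ent, List.getD_eq_getElem l 0 (by omega)]
  exact List.getElem_mem _

lemma exists_ent_eq_of_mem {l : List ℕ} {u : ℕ} (h : u ∈ l) :
    ∃ v, 1 ≤ v ∧ v ≤ l.length ∧ ent l v = u := by
  obtain ⟨i, hi, rfl⟩ := List.mem_iff_getElem.mp h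
  exact ⟨i + 1, by omega, hi, by rw [ent, Nat.add_sub_cancel, List.getD_eq_getElem l 0 hi]⟩

lemma epsW_pair (a b : ℕ) :
    epsW [a, b] = ((List.range a).map fun i => i + b + 1) ++ (List.range b).map (· + 1) := by
  simp [epsW]

lemma ent_epsW_left {a b v : ℕ} (h1 : 1 ≤ v) (h2 : v ≤ a) : ent (epsW [a, b]) v = v + b := by
  have hlt : v - 1 < ((List.range a).map fun i => i + b + 1).length := by
    simp only [List.length_map, List.length_range]; omega
  rw [ent, epsW_pair, List.getD_append _ _ _ _ hlt, List.getD_eq_getElem _ 0 hlt]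
  simp only [List.getElem_map, List.getElem_range]; omega

lemma ent_epsW_right {a b v : ℕ} (h1 : a < v) (h2 : v ≤ a + b) :
    ent (epsW [a, b]) v = v - a := by
  have hge : ((List.range a).map fun i => i + b + 1).length ≤ v - 1 := by
    simp only [List.length_map, List.length_range]; omega
  have hlt : v - 1 - a < ((List.range b).map (· + 1)).length := by
    simp only [List.length_map, List.length_range]; omega
  rw [ent, epsW_pair, List.getD_append_right _ _ _ _ hge, List.length_map, List.length_range,
    List.getD_eq_getElem _ 0 hlt]
  simp only [List.getElem_map, List.getElem_range]; omega

lemma wcomp_cat (f x y : List ℕ) :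
    wcomp f (cat x y) = x.map (ent f) ++ y.map fun v => ent f (v + rk x) := by
  simp [wcomp, cat, Function.comp_def]

lemma bsl_eq {z u : List ℕ} (hz : IsST z) (hu : IsST u) : bsl z u = z.map (· + rk u) ++ u := by
  rw [bsl, wcomp_cat]
  congr 1
  · exact List.map_congr_left fun a ha =>
      ent_epsW_left (hz.one_le_of_mem ha) (le_rk_of_mem ha)
  · conv_rhs => rw [← List.map_id' u]
    exact List.map_congr_left fun v hv => by
      rw [ent_epsW_right (by have := hu.one_le_of_mem hv; omega)
        (by have := le_rk_of_mem hv; omega)]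
      omega

lemma inD.isST {x : List ℕ} (hx : inD x) : IsST x := by
  rw [inD] at hx
  exact hx.1

lemma inD_ne_bsl {x z u : List ℕ} (hx : inD x) (hz : inD z) (hu : IsST u) : x ≠ bsl z u := by
  have hzS := hz.isST
  rintro rfl
  rw [inD] at hx
  obtain ⟨-, hsmall | ⟨-, -, hno⟩⟩ := hx
  · obtain ⟨a, t, rfl⟩ := List.exists_cons_of_ne_nil hzS.1
    have ha := hzS.one_le_of_mem List.mem_cons_self
    have hu1 := hu.one_le_rk
    -- the first letter of `z \ u` is at least 2
    rw [bsl_eq hzS hu] at hsmall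
    simp only [List.map_cons, List.cons_append, List.cons.injEq] at hsmall
    omega
  · refine hno ⟨z, u, ?_, hz, hu, rfl⟩
    have := List.length_pos_iff.mpr hu.1
    simp only [bsl_eq hzS hu, List.length_append, List.length_map]
    omega

lemma _root_.StrictMonoOn.add_sub_le {F : ℕ → ℕ} {a b i j : ℕ}
    (hF : StrictMonoOn F (Set.Icc a b)) (hai : a ≤ i) (hij : i ≤ j) (hjb : j ≤ b) :
    F i + (j - i) ≤ F j := by
  induction j, hij using Nat.le_induction with
  | base => simp
  | succ j hij ih =>
    have := hF ⟨by omega, by omega⟩ ⟨by omega, hjb⟩ (Nat.lt_succ_self j)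
    have := ih (by omega)
    omega

namespace IsShuffle

variable {r s : ℕ} {f : List ℕ} (hf : IsShuffle [r, s] f)
include hf

lemma length_eq : f.length = r + s := by simpa using hf.1.2.1

lemma rk_eq : rk f = r + s := by simpa using hf.2

lemma strictMonoOn_left : StrictMonoOn (ent f) (Set.Icc 1 r) := by
  intro i hi j hj hij
  simpa using hf.1.2.2 0 (by simp) i j hi.1 hij (by simpa using hj.2)

lemma strictMonoOn_right : StrictMonoOn (ent f) (Set.Icc (r + 1) (r + s)) := by
  intro i hi j hj hij
  simpa using hf.1.2.2 1 (by simp) i j hi.1 hij (by simpa using hj.2)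

lemma ent_mem_Icc {v : ℕ} (h1 : 1 ≤ v) (h2 : v ≤ r + s) : ent f v ∈ Set.Icc 1 (r + s) := by
  have hmem := ent_mem h1 (h2.trans_eq hf.length_eq.symm)
  exact ⟨hf.1.1.one_le_of_mem hmem, hf.rk_eq ▸ le_rk_of_mem hmem⟩

lemma exists_ent_eq {u : ℕ} (h1 : 1 ≤ u) (h2 : u ≤ r + s) :
    ∃ v, 1 ≤ v ∧ v ≤ r + s ∧ ent f v = u := by
  simpa [hf.length_eq] using exists_ent_eq_of_mem (hf.1.1.mem_of_le h1 (hf.rk_eq ▸ h2))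

variable {c : ℕ} (hc : ∀ v, r < v → v ≤ r + s → ent f v ≤ c)
include hc

lemma ent_eq_add_of_lt_ent {v : ℕ} (h1 : 1 ≤ v) (h2 : v ≤ r) (hv : c < ent f v) :
    ent f v = v + s := by
  have hle : ent f v + (r - v) ≤ ent f r := hf.strictMonoOn_left.add_sub_le h1 h2 le_rfl
  have hr := (hf.ent_mem_Icc (v := r) (by omega) (by omega)).2
  suffices Finset.Icc (ent f v) (r + s) ⊆ (Finset.Icc v r).image (ent f) by
    have := (Finset.card_le_card this).trans Finset.card_image_le
    simp only [Nat.card_Icc] at this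
    omega
  -- every value in `[f v, r + s]` exceeds `c`, so it is taken on `[v, r]`
  intro u hu
  rw [Finset.mem_Icc] at hu
  obtain ⟨v', hv'1, hv'2, rfl⟩ := hf.exists_ent_eq (by omega) hu.2
  have hv'r : v' ≤ r := by
    by_contra! h
    have := hc v' h hv'2
    omega
  have hvv' : v ≤ v' := by
    by_contra! h
    have := hf.strictMonoOn_left ⟨hv'1, hv'r⟩ ⟨h1, h2⟩ h
    omega
  exact Finset.mem_image_of_mem _ (Finset.mem_Icc.mpr ⟨hvv', hv'r⟩)

lemma ent_eq_add_of_lt_add {v : ℕ} (h2 : v ≤ r) (hv : c < v + s) :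
    ent f v = v + s := by
  obtain ⟨v', hv'1, hv'2, hv'⟩ := hf.exists_ent_eq (u := v + s) (by omega) (by omega)
  have hv'r : v' ≤ r := by
    by_contra! h
    have := hc v' h hv'2
    omega
  have := hf.ent_eq_add_of_lt_ent hc hv'1 hv'r (by omega)
  rw [show v = v' by omega] at hv ⊢
  omega

end IsShuffle

lemma IsShuffle.eq_epsW {r s : ℕ} {f : List ℕ} (hf : IsShuffle [r, s] f)
    (hleft : ∀ v, 1 ≤ v → v ≤ r → ent f v = v + s)
    (hright : ∀ v, r < v → v ≤ r + s → ent f v ≤ s) : f = epsW [r, s] := by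
  have hright_eq : ∀ v, r < v → v ≤ r + s → ent f v = v - r := by
    intro v h1 h2
    have hlow := hf.strictMonoOn_right.add_sub_le (i := r + 1) le_rfl (by omega) h2
    have hup := hf.strictMonoOn_right.add_sub_le (j := r + s) (by omega) h2 le_rfl
    have := (hf.ent_mem_Icc (v := r + 1) (by omega) (by omega)).1
    have := hright (r + s) (by omega) le_rfl
    omega
  have hlen : (epsW [r, s]).length = r + s := by simp [epsW_pair]
  apply List.ext_getElem (by rw [hf.length_eq, hlen])
  intro p hp hp'
  have hent : ∀ g : List ℕ, (hg : p < g.length) → g[p] = ent g (p + 1) := fun g hg => by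
    rw [ent, Nat.add_sub_cancel, List.getD_eq_getElem g 0 hg]
  rw [hent f hp, hent _ hp']
  rcases Nat.lt_or_ge p r with hpr | hpr
  · rw [hleft _ (by omega) hpr, ent_epsW_left (by omega) hpr]
  · rw [hright_eq _ (by omega) (by omega), ent_epsW_right (by omega) (by omega)]

lemma IsShuffle.eq_epsW_of_forall_lt_ent {r s c : ℕ} {f : List ℕ} (hf : IsShuffle [r, s] f)
    (hc : ∀ v, r < v → v ≤ r + s → ent f v ≤ c) (hr : 1 ≤ r)
    (hleft : ∀ v, 1 ≤ v → v ≤ r → c < ent f v) : f = epsW [r, s] := by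
  have hleft_eq v (h1 : 1 ≤ v) (h2 : v ≤ r) : ent f v = v + s :=
    hf.ent_eq_add_of_lt_ent hc h1 h2 (hleft v h1 h2)
  have hcs : c < 1 + s := hleft_eq 1 le_rfl hr ▸ hleft 1 le_rfl hr
  exact hf.eq_epsW hleft_eq fun v h1 h2 => by have := hc v h1 h2; omega

lemma lt_of_mem_map_add {z : List ℕ} {c u : ℕ} (hz : IsST z) (hu : u ∈ z.map (· + c)) :
    c < u := by
  obtain ⟨b, hb, rfl⟩ := List.mem_map.mp hu
  have := hz.one_le_of_mem hb
  omega

lemma append_eq_bsl {p q z : List ℕ} {s c : ℕ} (hx : IsST (p ++ q)) (hz : IsST z)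
    (hq : q ≠ []) (hp : p.map (· + s) = z.map (· + c)) (hqc : ∀ b ∈ q, b + s ≤ c) :
    IsST q ∧ p ++ q = bsl z q := by
  obtain ⟨b, hb⟩ := List.exists_mem_of_ne_nil q hq
  have hb1 := hx.one_le_of_mem (List.mem_append_right p hb)
  have hbc := hqc b hb
  have hpd : p = z.map (· + (c - s)) := by
    refine List.map_injective_iff.mpr (add_left_injective s) ?_
    rw [hp, List.map_map]
    exact List.map_congr_left fun a _ => by simp only [Function.comp_apply]; omega
  have hp_gt : ∀ a ∈ p, c - s < a := fun a ha => lt_of_mem_map_add hz (hpd ▸ ha)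
  obtain ⟨a, ha⟩ := List.exists_mem_of_ne_nil p (by simpa [hpd] using hz.1)
  have hrk : c - s < rk (p ++ q) :=
    (hp_gt a ha).trans_le (le_rk_of_mem (List.mem_append_left q ha))
  have hq_iff : ∀ k, k ∈ q ↔ 1 ≤ k ∧ k ≤ c - s := by
    intro k
    constructor
    · intro hk
      have := hqc k hk
      exact ⟨hx.one_le_of_mem (List.mem_append_right p hk), by omega⟩
    · rintro ⟨hk1, hk2⟩
      rcases List.mem_append.mp (hx.mem_of_le hk1 (by omega)) with hkp | hkq
      · exact absurd (hp_gt k hkp) (by omega)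
      · exact hkq
  obtain ⟨hqS, hqrk⟩ := isST_of_forall_mem_iff hq_iff (by omega)
  refine ⟨hqS, ?_⟩
  rw [bsl_eq hz hqS, hqrk, ← hpd]

lemma IsShuffle.eq_epsW_or_append_eq_bsl {r s c : ℕ} {f p q z : List ℕ}
    (hf : IsShuffle [r, s] f) (hc : ∀ v, r < v → v ≤ r + s → ent f v ≤ c)
    (hx : IsST (p ++ q)) (hxr : rk (p ++ q) = r) (hz : IsST z)
    (hp : p.map (ent f) = z.map (· + c)) (hq : ∀ b ∈ q, ent f b ≤ c) :
    f = epsW [r, s] ∨ IsST q ∧ p ++ q = bsl z q := by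
  have hprefix : ∀ a ∈ p, c < ent f a := fun a ha =>
    lt_of_mem_map_add hz (hp ▸ List.mem_map_of_mem ha)
  rcases eq_or_ne q [] with rfl | hne
  · rw [List.append_nil] at hx hxr
    subst hxr
    exact .inl <| hf.eq_epsW_of_forall_lt_ent hc hx.one_le_rk fun v h1 h2 =>
      hprefix v (hx.mem_of_le h1 h2)
  refine .inr <| append_eq_bsl (s := s) (c := c) hx hz hne ?_ fun b hb => ?_
  · rw [← hp]
    refine List.map_congr_left fun a ha => ?_
    have hax := List.mem_append_left q ha
    exact (hf.ent_eq_add_of_lt_ent hc (hx.one_le_of_mem hax) (hxr ▸ le_rk_of_mem hax)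
      (hprefix a ha)).symm
  · by_contra! hlt
    have hb_le := hxr ▸ le_rk_of_mem (List.mem_append_right p hb)
    have := hf.ent_eq_add_of_lt_add hc hb_le hlt
    have := hq b hb
    omega

theorem statement_15_general (x y f z w : List ℕ) (n r m s l : ℕ)
    (hxD : inD x) (hx : memST x n r) (hy : memST y m s)
    (hf : IsShuffle [r, s] f) (hfe : f ≠ epsW [r, s])
    (hz : inD z) (hw : IsST w) (hwl : w.length = l)
    (heq : wcomp f (cat x y) = bsl z w) :
    l < m := by
  obtain ⟨hxS, -, hxr⟩ := hx
  obtain ⟨hyS, rfl, rfl⟩ := hy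
  subst hwl
  have hzS := hz.isST
  rw [wcomp_cat, bsl_eq hzS hw, hxr] at heq
  by_contra! hml
  have hlen : x.length + y.length = z.length + w.length := by
    simpa using congrArg List.length heq
  have hsplit := List.take_append_drop z.length x
  set p := x.take z.length
  set q := x.drop z.length
  rw [← hsplit] at hxD hxS hxr heq
  rw [List.map_append, List.append_assoc] at heq
  obtain ⟨hp, hq⟩ :=
    List.append_inj heq (by simp only [List.length_map, List.length_take, p]; omega)
  have hright : ∀ v, r < v → v ≤ r + rk y → ent f v ≤ rk w := fun v h1 h2 => by
    have hv := hyS.mem_of_le (k := v - r) (by omega) (by omega)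
    have hmem : ent f (v - r + r) ∈ w :=
      hq ▸ List.mem_append_right _ (List.mem_map_of_mem (f := fun v => ent f (v + r)) hv)
    rw [Nat.sub_add_cancel h1.le] at hmem
    exact le_rk_of_mem hmem
  have hleft : ∀ b ∈ q, ent f b ≤ rk w := fun b hb =>
    le_rk_of_mem (hq ▸ List.mem_append_left _ (List.mem_map_of_mem hb))
  rcases hf.eq_epsW_or_append_eq_bsl hright hxS hxr hzS hp hleft with hfe' | ⟨hqS, hxq⟩
  · exact hfe hfe'
  · exact inD_ne_bsl hxD hz hqS hxq

/-- if `x ∈ 𝒟`, `f ∈ Sh^≺(r,s)`, `f ≠ ε(r,s)` and `f∘(x×y) = z\w` with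
`z ∈ 𝒟` and `w ∈ ST_l`, then `l < m`. -/
theorem statement_15 (x y f z w : List ℕ) (n r m s l : ℕ)
    (hxD : inD x) (hx : memST x n r) (hy : memST y m s)
    (hf : IsShuffle [r, s] f) (hfp : ent f (r + s) < ent f r) (hfe : f ≠ epsW [r, s])
    (hz : inD z) (hw : IsST w) (hwl : w.length = l)
    (heq : wcomp f (cat x y) = bsl z w) :
    l < m :=
  statement_15_general x y f z w n r m s l hxD hx hy hf hfe hz hw hwl heq

end SurjPerm
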